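/- For the Lie algebra 𝔢(2) with basis F₁,F₂,F₃, brackets [F₁,F₂]=F₃, [F₃,F₁]=F₂, [F₂,F₃]=0, and Lorentzian metric g₁ with g(F₁,F₁)=g(F₂,F₂)=1, g(F₃,F₃)=−1, the Ricci tensor of the left-invariant Levi-Civita connection vanishes except Rc(F₁,F₁)=2, and the Ricci operator equals diag(2,0,0). -/
import Mathlib


noncomputable section

/-- The underlying space of the Lie algebra `𝔢(2)` of the Euclidean motion group,
with basis `F₁ = oe 0`, `F₂ = oe 1`, `F₃ = oe 2`. -/
abbrev V3 : Type := Fin 3 → ℝ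

def oe (i : Fin 3) : V3 := Pi.single i 1

/-- Brackets: `[F₁,F₂] = F₃`, `[F₃,F₁] = F₂`, `[F₂,F₃] = 0`. -/
def br (x y : V3) : V3 := fun i =>
  if i = 1 then x 2 * y 0 - x 0 * y 2
  else if i = 2 then x 0 * y 1 - x 1 * y 0
  else 0

/-- The Lorentzian metric `g₁`: `g(F₁,F₁) = g(F₂,F₂) = 1`, `g(F₃,F₃) = −1`. -/
def g1 (x y : V3) : ℝ := x 0 * y 0 + x 1 * y 1 - x 2 * y 2

/-- `D` is a derivation of the bracket. -/
def IsDer (D : V3 →ₗ[ℝ] V3) : Prop :=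
  ∀ x y : V3, D (br x y) = br (D x) y + br x (D y)

/-- Koszul formula for the left-invariant Levi-Civita connection of `g₁`. -/
def Koszul (nab : V3 →ₗ[ℝ] V3 →ₗ[ℝ] V3) : Prop :=
  ∀ x y z : V3, 2 * g1 (nab x y) z = g1 (br x y) z - g1 (br y z) x + g1 (br z x) y

/-- Curvature tensor `R(X,Y)Z = ∇_X∇_Y Z − ∇_Y∇_X Z − ∇_{[X,Y]}Z`. -/
def Rcurv (nab : V3 →ₗ[ℝ] V3 →ₗ[ℝ] V3) (x y z : V3) : V3 :=
  nab x (nab y z) - nab y (nab x z) - nab (br x y) z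

/-- Ricci tensor `Rc(X,Y) = Σᵢ εᵢ g(R(eᵢ,X)Y, eᵢ)` over the pseudo-orthonormal basis. -/
def Rc (nab : V3 →ₗ[ℝ] V3 →ₗ[ℝ] V3) (x y : V3) : ℝ :=
  ∑ i : Fin 3, g1 (oe i) (oe i) * g1 (Rcurv nab (oe i) x y) (oe i)

/-- The explicit Levi-Civita connection. -/
def Nb (x y : V3) : V3 := fun k =>
  if k = 0 then -(x 1 * y 2 + x 2 * y 1)
  else if k = 1 then x 2 * y 0
  else -(x 1 * y 0)

lemma oe_apply (i j : Fin 3) : oe i j = if j = i then 1 else 0 := by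
  simp [oe, Pi.single_apply]

lemma ext_g1 (v w : V3) (h : ∀ k, g1 v (oe k) = g1 w (oe k)) : v = w := by
  have h0 := h 0
  have h1 := h 1
  have h2 := h 2
  simp [g1, oe_apply] at h0 h1 h2
  funext i
  fin_cases i <;> simp_all <;> linarith

lemma nab_eq (nab : V3 →ₗ[ℝ] V3 →ₗ[ℝ] V3) (hK : Koszul nab) (x y : V3) :
    nab x y = Nb x y := by
  apply ext_g1
  intro k
  have h := hK x y (oe k)
  fin_cases k <;>
    simp [g1, br, oe_apply, Nb] at h ⊢ <;> try linarith

lemma Rc_eq (nab : V3 →ₗ[ℝ] V3 →ₗ[ℝ] V3) (hK : Koszul nab) (x y : V3) :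
    Rc nab x y = 2 * (x 0 * y 0) := by
  have hn := nab_eq nab hK
  simp only [Rc, Rcurv, hn, Fin.sum_univ_three]
  simp [g1, br, oe_apply, Nb]
  ring

/-- the Ricci tensor of `g₁` on `𝔢(2)` vanishes except `Rc(F₁,F₁) = 2`,
and the Ricci operator equals `diag(2,0,0)`. -/
theorem e2_g1_ricci (nab : V3 →ₗ[ℝ] V3 →ₗ[ℝ] V3) (hK : Koszul nab)
    (Ric : V3 →ₗ[ℝ] V3) (hRic : ∀ x y : V3, g1 (Ric x) y = Rc nab x y) :
    Rc nab (oe 0) (oe 0) = 2 ∧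
    (∀ i j : Fin 3, ¬(i = 0 ∧ j = 0) → Rc nab (oe i) (oe j) = 0) ∧
    Ric (oe 0) = (2 : ℝ) • oe 0 ∧ Ric (oe 1) = 0 ∧ Ric (oe 2) = 0 := by
  have hRc := Rc_eq nab hK
  refine ⟨?_, ?_, ?_, ?_, ?_⟩
  · rw [hRc]; simp [oe_apply]
  · intro i j hij
    rw [hRc]
    fin_cases i <;> fin_cases j <;> simp_all [oe_apply]
  · apply ext_g1
    intro k
    rw [hRic, hRc]
    fin_cases k <;> simp [g1, oe_apply]
  · apply ext_g1
    intro k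
    rw [hRic, hRc]
    fin_cases k <;> simp [g1, oe_apply]
  · apply ext_g1
    intro k
    rw [hRic, hRc]
    fin_cases k <;> simp [g1, oe_apply]
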